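/- arXiv:1104.5532 — 4 statements merged into one kernel-verified Lean document; each statement's English description precedes it below -/
import Mathlib

section
/- For a connected graph consisting of a clique on C vertices and a path on P vertices attached via α edges joining the first path vertex to α clique vertices (with C+P=N), the sum of all pairwise shortest-path distances equals C(C,2) + C·C(P+1,2) + P(C-α) + C(P+1,3), where C(n,k) denotes binomial coefficients. -/
/-- The graph on `Fin C ⊕ Fin P` consisting of a clique on `C` vertices and a path
`v_1 - ⋯ - v_P`, where the first path vertex `v_1` is joined to the first `α` clique
vertices. -/
def cliquePathGraph (C P α : ℕ) : SimpleGraph (Fin C ⊕ Fin P) :=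
  SimpleGraph.fromRel fun a b =>
    match a, b with
    | Sum.inl _, Sum.inl _ => True
    | Sum.inl i, Sum.inr x => (x : ℕ) = 0 ∧ (i : ℕ) < α
    | Sum.inr x, Sum.inr y => (x : ℕ) + 1 = (y : ℕ)
    | Sum.inr _, Sum.inl _ => False

/-!
All distances are explicit: `1` inside the clique, `|x - y|` along the path, and `x + 1` or
`x + 2` from a clique vertex to the path vertex `inr x` (that is, `v_{x+1}`), according as the
clique vertex is adjacent to `v_1` or not. Explicit walks give the upper bounds. For the lower
bounds, a function that changes by at most one along every edge changes by at most `dist u v`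
between reachable `u` and `v`; apply this to the distance to the clique vertices not adjacent
to `v_1`. Summing the four blocks of the distance matrix leaves sums of consecutive integers
and of their differences, i.e. binomial coefficients.
-/

open Finset Sum SimpleGraph

namespace SimpleGraph

variable {V : Type*} {G : SimpleGraph V} {u v : V} {f : V → ℕ}

theorem Walk.le_add_length_of_adj_le (hf : ∀ a b, G.Adj a b → f a ≤ f b + 1)
    (w : G.Walk u v) : f u ≤ f v + w.length := by
  induction w with
  | nil => simp
  | cons h _ ih =>
    have := hf _ _ h
    rw [Walk.length_cons]
    omega

theorem Reachable.le_add_dist_of_adj_le (hf : ∀ a b, G.Adj a b → f a ≤ f b + 1)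
    (h : G.Reachable u v) : f u ≤ f v + G.dist u v := by
  obtain ⟨w, hw⟩ := h.exists_walk_length_eq_dist
  exact hw ▸ w.le_add_length_of_adj_le hf

end SimpleGraph

theorem sum_range_id_eq_choose_two (n : ℕ) : ∑ i ∈ range n, i = n.choose 2 := by
  rw [sum_range_id, Nat.choose_two_right]

theorem sum_range_add_one_eq_choose_two (n : ℕ) :
    ∑ i ∈ range n, (i + 1) = (n + 1).choose 2 := by
  rw [← sum_range_id_eq_choose_two, sum_range_succ', add_zero]

theorem sum_range_sub_eq_choose_two (n : ℕ) : ∑ i ∈ range n, (n - i) = (n + 1).choose 2 := by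
  rw [← sum_range_add_one_eq_choose_two, ← sum_range_reflect]
  exact sum_congr rfl fun i hi => by rw [mem_range] at hi; omega

theorem sum_range_sum_range_sub (n : ℕ) :
    ∑ x ∈ range n, ∑ y ∈ range n, (y - x) = (n + 1).choose 3 := by
  induction n with
  | zero => rfl
  | succ n ih =>
    have hcol : ∑ y ∈ range n, (y - n) = 0 :=
      sum_eq_zero fun y hy => by rw [mem_range] at hy; omega
    simp only [sum_range_succ, sum_add_distrib, ih, hcol, sum_range_sub_eq_choose_two]
    have pascal : (n + 1 + 1).choose 3 = (n + 1).choose 2 + (n + 1).choose 3 :=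
      Nat.choose_succ_succ' (n + 1) 2
    omega

theorem sum_sum_ite_eq_two_mul_choose_two (n : ℕ) :
    ∑ i : Fin n, ∑ j : Fin n, (if i = j then 0 else 1) = 2 * n.choose 2 := by
  have hrow (i : Fin n) : ∑ j : Fin n, (if i = j then 0 else 1) = n - 1 := by
    simp [sum_ite, filter_ne]
  rw [sum_congr rfl fun i _ => hrow i, sum_const, card_univ, Fintype.card_fin, smul_eq_mul,
    Nat.choose_two_right, Nat.mul_div_cancel' n.even_mul_pred_self.two_dvd]

namespace cliquePathGraph

variable {C P α : ℕ}

theorem adj_inl_inl {i j : Fin C} (h : i ≠ j) : (cliquePathGraph C P α).Adj (inl i) (inl j) := by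
  simp [cliquePathGraph, h]

theorem adj_inl_inr {i : Fin C} {x : Fin P} (hx : (x : ℕ) = 0) (hi : (i : ℕ) < α) :
    (cliquePathGraph C P α).Adj (inl i) (inr x) := by
  simp [cliquePathGraph, hx, hi]

theorem adj_inr_inr {x y : Fin P} (h : (x : ℕ) + 1 = y) :
    (cliquePathGraph C P α).Adj (inr x) (inr y) := by
  simp only [cliquePathGraph, fromRel_adj, ne_eq, inr.injEq, Fin.ext_iff]
  omega

/-- The distance to the clique vertices not adjacent to `v_1`, when there are any. -/
def height (α : ℕ) : Fin C ⊕ Fin P → ℕ :=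
  Sum.elim (fun i => if (i : ℕ) < α then 1 else 0) (fun x => x + 2)

theorem height_le_of_adj {a b : Fin C ⊕ Fin P} (h : (cliquePathGraph C P α).Adj a b) :
    height α a ≤ height α b + 1 := by
  rcases a with i | x <;> rcases b with j | y <;>
    simp only [cliquePathGraph, fromRel_adj, ne_eq, reduceCtorEq, not_false_eq_true, or_false,
      false_or, true_and] at h <;>
    simp only [height, Sum.elim_inl, Sum.elim_inr] <;> (try split_ifs) <;> omega

theorem exists_walk_inr_inr {x y : Fin P} (h : (x : ℕ) ≤ y) :
    ∃ w : (cliquePathGraph C P α).Walk (inr x) (inr y), w.length = (y : ℕ) - x := by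
  obtain ⟨y, hy⟩ := y
  induction y with
  | zero =>
    obtain rfl : x = ⟨0, hy⟩ := Fin.ext (by simpa using h)
    exact ⟨.nil, rfl⟩
  | succ y ih =>
    rcases h.eq_or_lt with h | h
    · obtain rfl : x = ⟨y + 1, hy⟩ := Fin.ext h
      exact ⟨.nil, by simp⟩
    · obtain ⟨w, hw⟩ := ih (by omega) (by simp only at h ⊢; omega)
      refine ⟨w.concat (adj_inr_inr rfl), ?_⟩
      simp only [Walk.length_concat, hw] at h ⊢
      omega

theorem exists_walk_inl_inr (hα : 1 ≤ α) (i : Fin C) (x : Fin P) :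
    ∃ w : (cliquePathGraph C P α).Walk (inl i) (inr x),
      w.length = x + 1 + if (i : ℕ) < α then 0 else 1 := by
  obtain ⟨w, hw⟩ :=
    exists_walk_inr_inr (C := C) (α := α) (x := ⟨0, x.pos⟩) (y := x) x.val.zero_le
  by_cases hi : (i : ℕ) < α
  · exact ⟨.cons (adj_inl_inr rfl hi) w, by simp [hw, hi]⟩
  · let c : Fin C := ⟨0, i.pos⟩
    have hic : i ≠ c := fun h => hi (by simp only [h, c]; omega)
    exact ⟨.cons (adj_inl_inl hic) (.cons (adj_inl_inr rfl (by simpa [c])) w), by simp [hw, hi]⟩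

theorem dist_inl_inl (i j : Fin C) :
    (cliquePathGraph C P α).dist (inl i) (inl j) = if i = j then 0 else 1 := by
  split_ifs with h
  · rw [h, SimpleGraph.dist_self]
  · exact dist_eq_one_iff_adj.2 (adj_inl_inl h)

theorem dist_inr_inr_of_le {x y : Fin P} (h : (x : ℕ) ≤ y) :
    (cliquePathGraph C P α).dist (inr x) (inr y) = (y : ℕ) - x := by
  obtain ⟨w, hw⟩ := exists_walk_inr_inr (C := C) (α := α) h
  have hle := hw ▸ dist_le w
  have hge := w.reachable.symm.le_add_dist_of_adj_le (fun _ _ => height_le_of_adj)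
  rw [dist_comm] at hge
  simp only [height, Sum.elim_inr] at hge
  omega

theorem dist_inr_inr (x y : Fin P) :
    (cliquePathGraph C P α).dist (inr x) (inr y) = ((x : ℕ) - y) + ((y : ℕ) - x) := by
  rcases le_total (x : ℕ) y with h | h
  · rw [dist_inr_inr_of_le h]; omega
  · rw [dist_comm, dist_inr_inr_of_le h]; omega

theorem dist_inl_inr (hα : 1 ≤ α) (i : Fin C) (x : Fin P) :
    (cliquePathGraph C P α).dist (inl i) (inr x) = x + 1 + if (i : ℕ) < α then 0 else 1 := by
  obtain ⟨w, hw⟩ := exists_walk_inl_inr hα i x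
  have hle := hw ▸ dist_le w
  have hge := w.reachable.symm.le_add_dist_of_adj_le (fun _ _ => height_le_of_adj)
  rw [dist_comm] at hge
  simp only [height, Sum.elim_inr, Sum.elim_inl] at hge
  split_ifs at hle hge ⊢ <;> omega

theorem sum_dist_inl_inl :
    ∑ i : Fin C, ∑ j : Fin C, (cliquePathGraph C P α).dist (inl i) (inl j) =
      2 * C.choose 2 := by
  simp only [dist_inl_inl, sum_sum_ite_eq_two_mul_choose_two]

theorem sum_dist_inl_inr (hα : 1 ≤ α) :
    ∑ i : Fin C, ∑ x : Fin P, (cliquePathGraph C P α).dist (inl i) (inr x) =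
      C * (P + 1).choose 2 + P * (C - α) := by
  have hpath : ∑ x : Fin P, ((x : ℕ) + 1) = (P + 1).choose 2 := by
    rw [Fin.sum_univ_eq_sum_range (· + 1), sum_range_add_one_eq_choose_two]
  have hfar : #{i : Fin C | ¬(i : ℕ) < α} = C - α := by
    rw [filter_not, card_sdiff_of_subset (filter_subset _ _), Fin.card_filter_val_lt, card_univ,
      Fintype.card_fin]
    omega
  simp only [dist_inl_inr hα, sum_add_distrib, hpath, sum_const, card_univ, Fintype.card_fin,
    smul_eq_mul, ← mul_sum, sum_ite, hfar]
  ring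

theorem sum_dist_inr_inr :
    ∑ x : Fin P, ∑ y : Fin P, (cliquePathGraph C P α).dist (inr x) (inr y) =
      2 * (P + 1).choose 3 := by
  have h : ∑ x : Fin P, ∑ y : Fin P, ((y : ℕ) - x) = (P + 1).choose 3 := by
    rw [Fin.sum_univ_eq_sum_range (fun x => ∑ y : Fin P, ((y : ℕ) - x)),
      ← sum_range_sum_range_sub]
    exact sum_congr rfl fun x _ => Fin.sum_univ_eq_sum_range (· - x) P
  simp only [dist_inr_inr, sum_add_distrib]
  rw [sum_comm, h]
  ring

end cliquePathGraph

theorem stmt_7_general (C P α : ℕ) (hα1 : 1 ≤ α) :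
    ∑ u : Fin C ⊕ Fin P, ∑ v : Fin C ⊕ Fin P, (cliquePathGraph C P α).dist u v =
      2 * (C.choose 2 + C * (P + 1).choose 2 + P * (C - α) + (P + 1).choose 3) := by
  have hsymm : ∑ x : Fin P, ∑ i : Fin C, (cliquePathGraph C P α).dist (inr x) (inl i) =
      ∑ i : Fin C, ∑ x : Fin P, (cliquePathGraph C P α).dist (inl i) (inr x) := by
    rw [sum_comm]
    exact sum_congr rfl fun _ _ => sum_congr rfl fun _ _ => dist_comm
  simp only [Fintype.sum_sum_type, sum_add_distrib]
  rw [hsymm, cliquePathGraph.sum_dist_inl_inl, cliquePathGraph.sum_dist_inl_inr hα1,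
    cliquePathGraph.sum_dist_inr_inr]
  ring

/-- For the clique-plus-path graph, the sum of pairwise shortest-path distances (over
ordered pairs, i.e. twice the sum over unordered pairs) equals
`2 * (C(C,2) + C·C(P+1,2) + P(C-α) + C(P+1,3))`. -/
theorem stmt_7 (C P α : ℕ) (hC : 1 ≤ C) (hP : 1 ≤ P) (hα1 : 1 ≤ α) (hα2 : α ≤ C - 1) :
    ∑ u : Fin C ⊕ Fin P, ∑ v : Fin C ⊕ Fin P, (cliquePathGraph C P α).dist u v =
      2 * (C.choose 2 + C * (P + 1).choose 2 + P * (C - α) + (P + 1).choose 3) :=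
  stmt_7_general C P α hα1
end

section
/- The minimum possible sum of vertex betweenness centralities over all connected simple graphs on N vertices with m edges equals C(N,2) - m, the number of non-adjacent vertex pairs. -/
/-- `σ_st`: the number of shortest paths between `s` and `t`. -/
noncomputable def nsp {V : Type*} (G : SimpleGraph V) (s t : V) : ℕ :=
  Nat.card {p : G.Walk s t // p.IsPath ∧ p.length = G.dist s t}

/-- `σ_st(u)`: the number of shortest paths between `s` and `t` passing through `u`. -/
noncomputable def nspThru {V : Type*} (G : SimpleGraph V) (s t u : V) : ℕ :=
  Nat.card {p : G.Walk s t // p.IsPath ∧ p.length = G.dist s t ∧ u ∈ p.support}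

/-- The betweenness centrality of a vertex `u`. -/
noncomputable def btw {V : Type*} [Fintype V] [DecidableEq V]
    (G : SimpleGraph V) (u : V) : ℝ :=
  (1 / 2) * ∑ s : V, ∑ t : V,
    if s ≠ u ∧ t ≠ u ∧ s ≠ t then (nspThru G s t u : ℝ) / (nsp G s t : ℝ) else 0

/-!
Summing betweenness over all vertices, the pair `{s, t}` contributes the average number of
interior vertices of a shortest `s`–`t` path, which is `d(s, t) - 1`. So the total is
`Σ_{s<t} (d(s, t) - 1)`: every non-adjacent pair contributes at least `1`, with equality for
all pairs iff the diameter is at most `2`. A spanning star has diameter `2`, and adding any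
further edges to it realises every edge count between `N - 1` and `C(N, 2)`.
-/

open Finset SimpleGraph

namespace SimpleGraph

variable {V : Type*}

section ShortestPaths

variable {G : SimpleGraph V} {s t : V}

lemma Walk.IsPath.card_support_toFinset [DecidableEq V] {p : G.Walk s t} (hp : p.IsPath) :
    #p.support.toFinset = p.length + 1 := by
  rw [List.toFinset_card_of_nodup hp.support_nodup, Walk.length_support]

lemma nspThru_left : nspThru G s t s = nsp G s t :=
  Nat.card_congr <| Equiv.subtypeEquivRight fun p => by simp

lemma nspThru_right : nspThru G s t t = nsp G s t :=
  Nat.card_congr <| Equiv.subtypeEquivRight fun p => by simp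

variable [Fintype V]

lemma nsp_pos (h : G.Reachable s t) : 0 < nsp G s t := by
  classical
  obtain ⟨p, hp, hl⟩ := h.exists_path_of_dist
  exact Nat.card_pos_iff.2 ⟨⟨⟨p, hp, hl⟩⟩, inferInstance⟩

lemma nspThru_eq_card_filter [DecidableEq V] [DecidableRel G.Adj] (u : V) :
    nspThru G s t u =
      #{p : {p : G.Walk s t // p.IsPath ∧ p.length = G.dist s t} | u ∈ p.1.support} := by
  rw [nspThru, ← Fintype.card_subtype, ← Nat.card_eq_fintype_card]
  exact Nat.card_congr <| (Equiv.subtypeEquivRight fun p => and_assoc.symm).trans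
    (Equiv.subtypeSubtypeEquivSubtypeInter _ _).symm

lemma sum_nspThru : ∑ u, nspThru G s t u = nsp G s t * (G.dist s t + 1) := by
  classical
  simp_rw [nspThru_eq_card_filter, card_filter]
  rw [sum_comm, nsp, Nat.card_eq_fintype_card, ← smul_eq_mul, ← card_univ, ← sum_const]
  refine sum_congr rfl fun ⟨p, hp, hlen⟩ _ => ?_
  have hsupport : ({u | u ∈ p.support} : Finset V) = p.support.toFinset := by ext; simp
  rw [sum_boole, Nat.cast_id, hsupport, hp.card_support_toFinset, hlen]

lemma sum_ite_nspThru_div_nsp [DecidableEq V] (h : G.Reachable s t) :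
    ∑ u, (if s ≠ u ∧ t ≠ u ∧ s ≠ t then (nspThru G s t u : ℝ) / nsp G s t else 0) =
      ((G.dist s t - 1 : ℕ) : ℝ) := by
  rcases eq_or_ne s t with rfl | hst
  · simp
  have hd : 1 ≤ G.dist s t := h.pos_dist_of_ne hst
  have hn : (nsp G s t : ℝ) ≠ 0 := by exact_mod_cast (nsp_pos h).ne'
  have hfilter : ({u | s ≠ u ∧ t ≠ u ∧ s ≠ t} : Finset V) = univ \ {s, t} := by
    ext u
    simp [hst, eq_comm]
  rw [← sum_filter, hfilter, ← sum_div, sum_sdiff_eq_sub (subset_univ _), sum_pair hst,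
    ← Nat.cast_sum, sum_nspThru, nspThru_left, nspThru_right]
  field_simp
  push_cast [hd]
  ring

-- Truncated subtraction makes the diagonal terms `s = t` (distance `0`) vanish.
lemma sum_btw_eq_sum_dist_sub_one [DecidableEq V] (hG : G.Connected) :
    ∑ u, btw G u = ((∑ s, ∑ t, (G.dist s t - 1) : ℕ) : ℝ) / 2 := by
  simp only [_root_.btw, ← mul_sum]
  rw [← sum_comm_cycle (β := ℝ), one_div_mul_eq_div]
  congr 1
  push_cast
  exact sum_congr rfl fun s _ => sum_congr rfl fun t _ =>
    sum_ite_nspThru_div_nsp (hG.preconnected s t)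

end ShortestPaths

section EdgeCounting

variable [Fintype V]

lemma ncard_edgeSet_top : (⊤ : SimpleGraph V).edgeSet.ncard = (Fintype.card V).choose 2 := by
  classical
  rw [← coe_edgeFinset, Set.ncard_coe_finset, card_edgeFinset_top_eq_card_choose_two]

lemma ncard_edgeSet_add_ncard_edgeSet_compl (G : SimpleGraph V) :
    G.edgeSet.ncard + Gᶜ.edgeSet.ncard = (Fintype.card V).choose 2 := by
  rw [← ncard_edgeSet_top, ← top_sdiff, edgeSet_sdiff, add_comm,
    Set.ncard_sdiff_add_ncard_of_subset (edgeSet_mono le_top)]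

lemma sum_sum_ite_adj (G : SimpleGraph V) [DecidableRel G.Adj] :
    ∑ s, ∑ t, (if G.Adj s t then 1 else 0) = 2 * G.edgeSet.ncard := by
  classical
  rw [← coe_edgeFinset, Set.ncard_coe_finset, two_mul_card_edgeFinset, card_filter,
    Fintype.sum_prod_type]

end EdgeCounting

lemma Connected.dist_sub_one_eq [DecidableEq V] {G : SimpleGraph V} [DecidableRel G.Adj]
    (hG : G.Connected) (s t : V) :
    G.dist s t - 1 = (if Gᶜ.Adj s t then 1 else 0) + (G.dist s t - 2) := by
  rcases eq_or_ne s t with rfl | hst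
  · simp
  by_cases hadj : G.Adj s t
  · simp [hadj, dist_eq_one_iff_adj.2 hadj]
  · have h1 : 1 ≤ G.dist s t := hG.pos_dist_of_ne hst
    have h2 : G.dist s t ≠ 1 := mt dist_eq_one_iff_adj.1 hadj
    rw [if_pos ((compl_adj G s t).2 ⟨hst, hadj⟩)]
    omega

theorem sum_btw_eq_ncard_edgeSet_compl_add [Fintype V] [DecidableEq V] {G : SimpleGraph V}
    (hG : G.Connected) :
    ∑ u, btw G u = Gᶜ.edgeSet.ncard + ((∑ s, ∑ t, (G.dist s t - 2) : ℕ) : ℝ) / 2 := by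
  classical
  rw [sum_btw_eq_sum_dist_sub_one hG]
  simp_rw [hG.dist_sub_one_eq, sum_add_distrib, sum_sum_ite_adj]
  push_cast
  ring

lemma exists_le_le_ncard_edgeSet_eq {G H : SimpleGraph V} (hGH : G ≤ H) {m : ℕ}
    (hG : G.edgeSet.ncard ≤ m) (hH : m ≤ H.edgeSet.ncard) :
    ∃ K : SimpleGraph V, G ≤ K ∧ K ≤ H ∧ K.edgeSet.ncard = m := by
  obtain ⟨E, hGE, hEH, hE⟩ := Set.exists_subsuperset_card_eq (edgeSet_mono hGH) hG hH
  have hK : (fromEdgeSet E).edgeSet = E := by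
    rw [edgeSet_fromEdgeSet, sdiff_eq_left]
    exact Set.subset_compl_iff_disjoint_right.1 (hEH.trans H.edgeSet_subset_compl_diagSet)
  refine ⟨fromEdgeSet E, ?_, ?_, hK.symm ▸ hE⟩ <;> rw [← edgeSet_subset_edgeSet, hK]
  exacts [hGE, hEH]

lemma IsUniversal.dist_le_two {G : SimpleGraph V} {c : V} (hc : G.IsUniversal c) (s t : V) :
    G.dist s t ≤ 2 := by
  have hdist (v : V) : G.dist c v ≤ 1 := by
    rcases eq_or_ne c v with rfl | hv
    · simp
    · exact (dist_eq_one_iff_adj.2 (hc hv)).le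
  calc G.dist s t ≤ G.dist s c + G.dist c t := (Connected.of_isUniversal hc).dist_triangle
    _ ≤ 2 := by rw [dist_comm]; linarith [hdist s, hdist t]

lemma exists_connected_forall_dist_le_two [Fintype V] (c : V) {m : ℕ}
    (hm1 : Fintype.card V - 1 ≤ m) (hm2 : m ≤ (Fintype.card V).choose 2) :
    ∃ G : SimpleGraph V, G.Connected ∧ G.edgeSet.ncard = m ∧ ∀ s t, G.dist s t ≤ 2 := by
  classical
  have hstar : (starGraph c).edgeSet.ncard = Fintype.card V - 1 := by
    rw [← coe_edgeFinset, Set.ncard_coe_finset, ← (isTree_starGraph c).card_edgeFinset,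
      Nat.add_sub_cancel]
  obtain ⟨G, hcG, -, hG⟩ :=
    exists_le_le_ncard_edgeSet_eq le_top (hstar ▸ hm1) (ncard_edgeSet_top (V := V) ▸ hm2)
  have hc : G.IsUniversal c := fun _ hv => hcG (starGraph_center_adj hv)
  exact ⟨G, .of_isUniversal hc, hG, hc.dist_le_two⟩

end SimpleGraph

/-- The minimum possible sum of vertex betweenness centralities over all connected simple
graphs on `N` vertices with `m` edges equals `C(N,2) - m`. -/
theorem stmt_9 (N m : ℕ) (hN : 2 ≤ N) (hm1 : N - 1 ≤ m) (hm2 : m ≤ N.choose 2) :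
    IsLeast {x : ℝ | ∃ G : SimpleGraph (Fin N), G.Connected ∧ G.edgeSet.ncard = m ∧
      x = ∑ u : Fin N, btw G u} ((N.choose 2 : ℝ) - (m : ℝ)) := by
  have hcompl (G : SimpleGraph (Fin N)) (hG : G.edgeSet.ncard = m) :
      (Gᶜ.edgeSet.ncard : ℝ) = N.choose 2 - m := by
    have := ncard_edgeSet_add_ncard_edgeSet_compl G
    rw [Fintype.card_fin, hG] at this
    rw [← this]
    push_cast
    ring
  constructor
  · obtain ⟨G, hconn, hm, hdiam⟩ :=
      exists_connected_forall_dist_le_two (⟨0, by omega⟩ : Fin N) (by simpa using hm1)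
        (by simpa using hm2)
    refine ⟨G, hconn, hm, ?_⟩
    simp [sum_btw_eq_ncard_edgeSet_compl_add hconn, hcompl G hm, Nat.sub_eq_zero_of_le (hdiam _ _)]
  · rintro x ⟨G, hconn, hm, rfl⟩
    rw [sum_btw_eq_ncard_edgeSet_compl_add hconn, hcompl G hm]
    have : (0 : ℝ) ≤ ((∑ s, ∑ t, (G.dist s t - 2) : ℕ) : ℝ) / 2 := by positivity
    linarith
end

section
/- Every connected simple graph on N vertices with at least C(N-2,2)+1 edges has radius at most 2. -/
/-- The eccentricity of a vertex: its maximum distance to any vertex. -/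
noncomputable def eccentr {V : Type*} [Fintype V] (G : SimpleGraph V) (u : V) : ℕ :=
  Finset.univ.sup (G.dist u)

/-- The radius of a graph: the minimum eccentricity over all vertices. -/
noncomputable def graphRadius {V : Type*} [Fintype V] (G : SimpleGraph V) : ℕ :=
  sInf (Set.range (eccentr G))

/-!
Suppose every vertex has a vertex at distance at least `3`, and count the edges of the
complement. If `dist s t ≥ 3`, every vertex is at distance at least `2` from `s` or from `t`,
so `s` and `t` have at least `N` non-neighbours together. Every vertex `u` has at least three
non-neighbours: the vertices `a₂`, `a₃` at distance `2` and `3` on a geodesic `u a₁ a₂ a₃ …`,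
and a vertex at distance at least `3` from `a₁`. Hence the complement has at least
`(N + 3 (N - 2)) / 2 = 2N - 3` edges, and `G` at most `C(N, 2) - (2N - 3) = C(N - 2, 2)`.
-/

open Finset

theorem Nat.choose_two_eq_choose_sub_two_add {n : ℕ} (hn : 2 ≤ n) :
    n.choose 2 = (n - 2).choose 2 + (2 * n - 3) := by
  obtain ⟨k, rfl⟩ := Nat.exists_eq_add_of_le' hn
  simp only [Nat.choose_succ_succ', Nat.choose_zero_right, zero_add, Nat.choose_one_right,
    Nat.reduceAdd, add_tsub_cancel_right]
  omega

namespace SimpleGraph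

variable {V : Type*} {G : SimpleGraph V} {u v w : V}

theorem exists_adj_dist_eq_of_dist_eq_succ {n : ℕ} (h : G.dist u v = n + 1) :
    ∃ a, G.Adj u a ∧ G.dist a v = n := by
  obtain ⟨p, hp⟩ := exists_walk_of_dist_ne_zero (G := G) (u := u) (v := v) (by omega)
  cases p with
  | nil => simp at h
  | @cons _ a _ hua q =>
    have hq := dist_le q
    have := hua.reachable.dist_triangle_left v
    rw [dist_eq_one_iff_adj.2 hua] at this
    rw [Walk.length_cons] at hp
    exact ⟨a, hua, by omega⟩

theorem Reachable.compl_adj_iff_one_lt_dist (h : G.Reachable u w) :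
    Gᶜ.Adj u w ↔ 1 < G.dist u w := by
  refine ⟨fun ⟨hne, hadj⟩ => h.one_lt_dist_of_ne_of_not_adj hne hadj, fun hlt => ⟨?_, ?_⟩⟩
  · rintro rfl
    simp at hlt
  · intro hadj
    simp [dist_eq_one_iff_adj.2 hadj] at hlt

theorem exists_two_lt_dist_of_two_lt_graphRadius [Fintype V] (h : 2 < graphRadius G) (u : V) :
    ∃ v, 2 < G.dist u v := by
  have : 2 < eccentr G u := h.trans_le (Nat.sInf_le ⟨u, rfl⟩)
  simpa [eccentr, Finset.lt_sup_iff] using this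

section Finite

variable [Fintype V] [DecidableEq V] [DecidableRel G.Adj]

variable (G) in
theorem card_edgeFinset_add_card_edgeFinset_compl :
    #G.edgeFinset + #Gᶜ.edgeFinset = (Fintype.card V).choose 2 := by
  rw [← card_union_of_disjoint (disjoint_edgeFinset.2 disjoint_compl_right), ← edgeFinset_sup,
    ← card_edgeFinset_top_eq_card_choose_two]
  congr 1
  ext e
  rw [mem_edgeFinset, mem_edgeFinset, sup_compl_eq_top]

theorem card_add_mul_le_two_mul_card_edgeFinset {s t : V} {k : ℕ} (hst : s ≠ t)
    (hpair : Fintype.card V ≤ G.degree s + G.degree t) (hmin : ∀ w, k ≤ G.degree w) :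
    Fintype.card V + k * (Fintype.card V - 2) ≤ 2 * #G.edgeFinset := by
  have ht : t ∈ univ.erase s := mem_erase.2 ⟨hst.symm, mem_univ t⟩
  have hrest := card_nsmul_le_sum ((univ.erase s).erase t) (fun w => G.degree w) k
    fun w _ => hmin w
  rw [card_erase_of_mem ht, card_erase_of_mem (mem_univ s), card_univ, Nat.sub_sub,
    one_add_one_eq_two, smul_eq_mul, mul_comm] at hrest
  rw [← sum_degrees_eq_twice_card_edges, ← add_sum_erase _ _ (mem_univ s),
    ← add_sum_erase _ _ ht]
  omega

theorem Connected.card_le_degree_compl_add_degree_compl (hG : G.Connected) {s t : V}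
    (h : 2 < G.dist s t) : Fintype.card V ≤ Gᶜ.degree s + Gᶜ.degree t := by
  have hcover : univ ⊆ Gᶜ.neighborFinset s ∪ Gᶜ.neighborFinset t := by
    intro w _
    rw [mem_union, mem_neighborFinset, mem_neighborFinset, (hG s w).compl_adj_iff_one_lt_dist,
      (hG t w).compl_adj_iff_one_lt_dist, dist_comm (u := t)]
    have := hG.dist_triangle (u := s) (v := w) (w := t)
    omega
  simpa using (card_le_card hcover).trans (card_union_le _ _)

theorem Connected.three_le_degree_compl (hG : G.Connected) (hfar : ∀ x, ∃ y, 2 < G.dist x y)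
    (u : V) : 3 ≤ Gᶜ.degree u := by
  obtain ⟨v, huv⟩ := hfar u
  obtain ⟨n, hn⟩ : ∃ n, G.dist u v = n + 3 := ⟨_, (Nat.sub_add_cancel huv).symm⟩
  obtain ⟨a₁, hua₁, h₁⟩ := exists_adj_dist_eq_of_dist_eq_succ hn
  obtain ⟨a₂, ha₁₂, h₂⟩ := exists_adj_dist_eq_of_dist_eq_succ h₁
  obtain ⟨a₃, ha₂₃, h₃⟩ := exists_adj_dist_eq_of_dist_eq_succ h₂
  obtain ⟨z, hz⟩ := hfar a₁
  have hua₂ : 1 < G.dist u a₂ := by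
    have := hG.dist_triangle (u := u) (v := a₂) (w := v)
    omega
  have hua₃ : 1 < G.dist u a₃ := by
    have := hG.dist_triangle (u := u) (v := a₃) (w := v)
    omega
  have huz : 1 < G.dist u z := by
    have := hG.dist_triangle (u := a₁) (v := u) (w := z)
    rw [dist_eq_one_iff_adj.2 hua₁.symm] at this
    omega
  have hza₂ : z ≠ a₂ := by
    rintro rfl
    rw [dist_eq_one_iff_adj.2 ha₁₂] at hz
    omega
  have hza₃ : z ≠ a₃ := by
    rintro rfl
    have : G.dist a₁ z ≤ 2 := dist_le (.cons ha₁₂ (.cons ha₂₃ .nil))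
    omega
  rw [← card_neighborFinset_eq_degree, ← Nat.lt_iff_add_one_le, two_lt_card]
  simp only [mem_neighborFinset, (hG u _).compl_adj_iff_one_lt_dist]
  exact ⟨a₂, hua₂, a₃, hua₃, z, huz, ha₂₃.ne, hza₂.symm, hza₃.symm⟩

end Finite

end SimpleGraph

/-- Every connected simple graph on `N` vertices with at least `C(N-2,2)+1` edges has
radius at most 2. -/
theorem stmt_16 {V : Type*} [Fintype V] (G : SimpleGraph V) [DecidableRel G.Adj]
    (hG : G.Connected)
    (hm : (Fintype.card V - 2).choose 2 + 1 ≤ G.edgeFinset.card) :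
    graphRadius G ≤ 2 := by
  classical
  by_contra! hrad
  have hfar := SimpleGraph.exists_two_lt_dist_of_two_lt_graphRadius hrad
  obtain ⟨s⟩ := hG.nonempty
  obtain ⟨t, hst⟩ := hfar s
  have hne : s ≠ t := by
    rintro rfl
    simp at hst
  have hcompl := SimpleGraph.card_add_mul_le_two_mul_card_edgeFinset hne
    (hG.card_le_degree_compl_add_degree_compl hst) (hG.three_le_degree_compl hfar)
  have htotal := G.card_edgeFinset_add_card_edgeFinset_compl
  rw [Nat.choose_two_eq_choose_sub_two_add (Fintype.one_lt_card_iff.2 ⟨s, t, hne⟩)] at htotal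
  omega
end

section
/- If a vertex u is removed from a connected graph G and the resulting graph H is connected, then diam(G) ≤ diam(H) + 1 provided every diametral pair of G contains u; in general, for the maximum diameter over connected graphs of given order and size, T_max(N,m) ≤ T_max(N-1, m-d) + 1 for any achievable degree d of a removed vertex. -/
open scoped Classical

/-- The diameter of a graph: the maximum pairwise shortest-path distance. -/
noncomputable def graphDiam {V : Type*} [Fintype V] (G : SimpleGraph V) : ℕ :=
  Finset.univ.sup fun u => Finset.univ.sup (G.dist u)

/-- `T_max N m`: the maximum diameter over all connected simple graphs with `N` vertices
and `m` edges. -/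
noncomputable def Tmax (N m : ℕ) : ℕ :=
  sSup {k | ∃ G : SimpleGraph (Fin N), G.Connected ∧ G.edgeSet.ncard = m ∧ graphDiam G = k}

/-!
Let `H = G - u` be connected. A pair of vertices other than `u` is joined by a path inside `H`,
and distances can only shrink when `H` is put back into `G`. A shortest path leaving `u` first
steps to a neighbour `w ≠ u` and can then be continued inside `H`. So every distance in `G` is
at most `diam H + 1`. Since `H` has `N - 1` vertices and `m - d` edges, relabelling its vertices
by `Fin (N - 1)` makes it a competitor for `T_max(N - 1, m - d)`.
-/

namespace SimpleGraph

variable {V W : Type*}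

lemma Hom.dist_map_le {A : SimpleGraph V} {B : SimpleGraph W} (f : A →g B) {a b : V}
    (h : A.Reachable a b) : B.dist (f a) (f b) ≤ A.dist a b := by
  obtain ⟨p, hp⟩ := h.exists_walk_length_eq_dist
  simpa [hp] using dist_le (p.map f)

lemma Iso.dist_map {A : SimpleGraph V} {B : SimpleGraph W} (f : A ≃g B) (a b : V) :
    B.dist (f a) (f b) = A.dist a b := by
  by_cases h : A.Reachable a b
  · refine le_antisymm (f.toHom.dist_map_le h) ?_
    simpa using f.symm.toHom.dist_map_le ((Iso.reachable_iff (φ := f)).mpr h)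
  · rw [dist_eq_zero_of_not_reachable h,
      dist_eq_zero_of_not_reachable (mt (Iso.reachable_iff (φ := f)).mp h)]

lemma dist_le_dist_induce {G : SimpleGraph V} {s : Set V} (hs : (G.induce s).Connected)
    (a b : s) : G.dist a b ≤ (G.induce s).dist a b :=
  (Embedding.induce s).toHom.dist_map_le (hs a b)

section Diameter

variable [Fintype V]

lemma dist_le_graphDiam (G : SimpleGraph V) (a b : V) : G.dist a b ≤ graphDiam G :=
  (Finset.le_sup (f := G.dist a) (Finset.mem_univ b)).trans
    (Finset.le_sup (f := fun x => Finset.univ.sup (G.dist x)) (Finset.mem_univ a))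

lemma graphDiam_le_iff {G : SimpleGraph V} {n : ℕ} :
    graphDiam G ≤ n ↔ ∀ a b, G.dist a b ≤ n := by
  simp [graphDiam]

lemma Iso.graphDiam_le [Fintype W] {A : SimpleGraph V} {B : SimpleGraph W} (f : A ≃g B) :
    graphDiam A ≤ graphDiam B :=
  graphDiam_le_iff.mpr fun a b => f.dist_map a b ▸ dist_le_graphDiam B (f a) (f b)

lemma graphDiam_le_Tmax {G : SimpleGraph V} (hG : G.Connected) :
    graphDiam G ≤ Tmax (Fintype.card V) G.edgeSet.ncard := by
  let f : G ≃g G.map (Fintype.equivFin V).toEmbedding := Iso.map (Fintype.equivFin V) G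
  have hbdd : BddAbove {k | ∃ G' : SimpleGraph (Fin (Fintype.card V)),
      G'.Connected ∧ G'.edgeSet.ncard = G.edgeSet.ncard ∧ graphDiam G' = k} :=
    ((Set.finite_range graphDiam).subset <| by
      rintro _ ⟨G', -, -, rfl⟩; exact ⟨G', rfl⟩).bddAbove
  refine f.graphDiam_le.trans (le_csSup hbdd ⟨_, f.connected_iff.mp hG, ?_, rfl⟩)
  rw [← Nat.card_coe_set_eq, ← Nat.card_coe_set_eq]
  exact (Nat.card_congr f.mapEdgeSet).symm

lemma ncard_edgeSet_induce_compl_singleton (G : SimpleGraph V) (u : V) :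
    (G.induce {u}ᶜ).edgeSet.ncard = G.edgeSet.ncard - (G.neighborSet u).ncard := by
  classical
  simp only [← coe_edgeFinset, ← coe_neighborFinset, Set.ncard_coe_finset,
    card_neighborFinset_eq_degree]
  exact (G.card_edgeFinset_induce_compl_singleton u).trans
    (G.card_edgeFinset_deleteIncidenceSet u)

-- `DecidableEq V` selects the `Fintype ({u}ᶜ : Set V)` instance occurring in `stmt_17`.
variable [DecidableEq V] {G : SimpleGraph V} {u : V}

lemma dist_le_graphDiam_induce_compl_singleton (hH : (G.induce {u}ᶜ).Connected) {a b : V}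
    (ha : a ≠ u) (hb : b ≠ u) : G.dist a b ≤ graphDiam (G.induce {u}ᶜ) :=
  (dist_le_dist_induce hH ⟨a, ha⟩ ⟨b, hb⟩).trans (dist_le_graphDiam _ _ _)

lemma dist_le_graphDiam_induce_compl_singleton_add_one (hH : (G.induce {u}ᶜ).Connected)
    (b : V) : G.dist u b ≤ graphDiam (G.induce {u}ᶜ) + 1 := by
  by_cases hub : G.dist u b = 0
  · omega
  obtain ⟨hne, ⟨p⟩⟩ := dist_ne_zero_iff_ne_and_reachable.mp hub
  have hw : G.Adj u p.snd := p.adj_snd (Walk.not_nil_of_ne hne)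
  calc G.dist u b ≤ G.dist u p.snd + G.dist p.snd b := hw.reachable.dist_triangle_left b
    _ ≤ 1 + graphDiam (G.induce {u}ᶜ) := by
      rw [dist_eq_one_iff_adj.mpr hw]
      gcongr
      exact dist_le_graphDiam_induce_compl_singleton hH hw.ne' hne.symm
    _ = graphDiam (G.induce {u}ᶜ) + 1 := add_comm _ _

lemma graphDiam_le_graphDiam_induce_compl_singleton_add_one
    (hH : (G.induce {u}ᶜ).Connected) : graphDiam G ≤ graphDiam (G.induce {u}ᶜ) + 1 := by
  refine graphDiam_le_iff.mpr fun a b => ?_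
  by_cases ha : a = u
  · subst ha
    exact dist_le_graphDiam_induce_compl_singleton_add_one hH b
  by_cases hb : b = u
  · subst hb
    rw [dist_comm]
    exact dist_le_graphDiam_induce_compl_singleton_add_one hH a
  exact (dist_le_graphDiam_induce_compl_singleton hH ha hb).trans (Nat.le_succ _)

end Diameter

end SimpleGraph

theorem stmt_17_general {V : Type*} [Fintype V] [DecidableEq V] (G : SimpleGraph V)
    (u : V) (N m d : ℕ)
    (hN : N = Fintype.card V) (hm : m = G.edgeSet.ncard)
    (hd : d = (G.neighborSet u).ncard)
    (hH : (G.induce ({u}ᶜ : Set V)).Connected) :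
    ((∀ a b : V, G.dist a b = graphDiam G → a = u ∨ b = u) →
      graphDiam G ≤ graphDiam (G.induce ({u}ᶜ : Set V)) + 1) ∧
    (graphDiam G = Tmax N m → Tmax N m ≤ Tmax (N - 1) (m - d) + 1) := by
  have hdiam := SimpleGraph.graphDiam_le_graphDiam_induce_compl_singleton_add_one hH
  refine ⟨fun _ => hdiam, fun hTmax => ?_⟩
  have hcard : Fintype.card ({u}ᶜ : Set V) = N - 1 := by
    simp [hN, Finset.filter_ne']
  have hedges : (G.induce ({u}ᶜ : Set V)).edgeSet.ncard = m - d := by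
    rw [hm, hd, SimpleGraph.ncard_edgeSet_induce_compl_singleton]
  calc Tmax N m = graphDiam G := hTmax.symm
    _ ≤ graphDiam (G.induce ({u}ᶜ : Set V)) + 1 := hdiam
    _ ≤ Tmax (N - 1) (m - d) + 1 := by
      rw [← hcard, ← hedges]
      exact Nat.add_le_add_right (SimpleGraph.graphDiam_le_Tmax hH) 1

/-- Removing a vertex `u` from a connected graph `G`: if the resulting graph `H` is
connected and every diametral pair of `G` contains `u`, then `diam G ≤ diam H + 1`;
and if moreover `G` achieves the maximum diameter `T_max(N,m)` and `u` has degree `d`,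
then `T_max(N,m) ≤ T_max(N-1, m-d) + 1`. -/
theorem stmt_17 {V : Type*} [Fintype V] [DecidableEq V] (G : SimpleGraph V)
    (hG : G.Connected) (u : V) (N m d : ℕ)
    (hN : N = Fintype.card V) (hm : m = G.edgeSet.ncard)
    (hd : d = (G.neighborSet u).ncard)
    (hH : (G.induce ({u}ᶜ : Set V)).Connected) :
    ((∀ a b : V, G.dist a b = graphDiam G → a = u ∨ b = u) →
      graphDiam G ≤ graphDiam (G.induce ({u}ᶜ : Set V)) + 1) ∧
    (graphDiam G = Tmax N m → Tmax N m ≤ Tmax (N - 1) (m - d) + 1) :=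
  stmt_17_general G u N m d hN hm hd hH
end
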